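/- arXiv:2410.11159 — 4 statements merged into one kernel-verified Lean document; each statement's English description precedes it below -/
import Mathlib

section
/- Let G = D_n be a dihedral group of order 2n generated by r of order n and s of order 2 with (sr)^2 = 1, and let N_1, ..., N_k be normal subgroups of G with trivial total intersection. Then the intersection of the subgroups G'N_1, ..., G'N_k equals the derived subgroup G' = ⟨r^2⟩. -/
/-!
Modulo `G' = ⟨r²⟩` the only question is the parity of rotations and reflections. If `x` is a
reflection lying in every `G'Nᵢ`, each `Nᵢ` contains a reflection, hence (by conjugating it with
`r`) also `r²`, so `G' ≤ ⋂ Nᵢ = 1` and `x ∈ ⋂ Nᵢ = 1`, absurd. If `x = rʲ` with `j` odd, then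
`n = 2h` is even and each `Nᵢ` contains an odd rotation `rᵉ`, whose `h`-th power is `rʰ ≠ 1`;
so `rʰ ∈ ⋂ Nᵢ = 1`, absurd again.
-/

open DihedralGroup Subgroup
open scoped commutatorElement

theorem ZMod.even_of_odd_modulus {n : ℕ} (hn : Odd n) (j : ZMod n) : Even j := by
  obtain ⟨m, rfl⟩ := hn
  have h0 : ((2 * m + 1 : ℕ) : ZMod (2 * m + 1)) = 0 := ZMod.natCast_self _
  push_cast at h0
  exact ⟨(m + 1) * j, by linear_combination (-j) * h0⟩

theorem ZMod.natCast_mul_eq_of_not_even {h : ℕ} {j : ZMod (h + h)} (hj : ¬Even j) :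
    (h : ZMod (h + h)) * j = h := by
  obtain ⟨e, rfl⟩ := ZMod.intCast_surjective j
  obtain ⟨c, rfl⟩ := Int.not_even_iff_odd.mp fun he => hj (he.intCast (α := ZMod (h + h)))
  have h0 : ((h + h : ℕ) : ZMod (h + h)) = 0 := ZMod.natCast_self _
  push_cast at h0 ⊢
  linear_combination (c : ZMod (h + h)) * h0

namespace DihedralGroup

variable {n : ℕ}

theorem mem_zpowers_r_two_iff {x : DihedralGroup n} :
    x ∈ zpowers (r 2) ↔ ∃ z : ZMod n, x = r (2 * z) := by
  constructor
  · rintro ⟨t, rfl⟩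
    exact ⟨t, by simp⟩
  · rintro ⟨z, rfl⟩
    obtain ⟨t, rfl⟩ := ZMod.intCast_surjective z
    exact ⟨t, by simp⟩

theorem commutator_eq_zpowers_r_two : commutator (DihedralGroup n) = zpowers (r 2) := by
  apply le_antisymm
  · rw [commutator_def, commutator_le]
    rintro (i | i) - (j | j) - <;> rw [mem_zpowers_r_two_iff]
    · exact ⟨0, by simp [commutatorElement_def]⟩
    · exact ⟨i, by simp [commutatorElement_def]; ring⟩
    · exact ⟨-j, by simp [commutatorElement_def]; ring⟩
    · exact ⟨j - i, by simp [commutatorElement_def]; ring⟩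
  · have : ⁅(r 1 : DihedralGroup n), sr (0 : ZMod n)⁆ = r 2 := by
      simp [commutatorElement_def]; ring
    rw [zpowers_le, ← this]
    exact commutator_mem_commutator (mem_top _) (mem_top _)

theorem exists_r_two_mul_mem_of_mem_sup {N : Subgroup (DihedralGroup n)} [N.Normal]
    {x : DihedralGroup n} (hx : x ∈ zpowers (r 2) ⊔ N) : ∃ z : ZMod n, r (2 * z) * x ∈ N := by
  obtain ⟨y, hy, d, hd, rfl⟩ := mem_sup_of_normal_right.mp hx
  obtain ⟨z, rfl⟩ := mem_zpowers_r_two_iff.mp hy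
  exact ⟨-z, by simpa [← mul_assoc]⟩

theorem r_two_mem_of_sr_mem {N : Subgroup (DihedralGroup n)} [hN : N.Normal] {i : ZMod n}
    (h : sr i ∈ N) : r 2 ∈ N := by
  have := N.mul_mem (hN.conj_mem _ h (r 1)) h
  simp only [r_mul_sr, inv_r, sr_mul_r, sr_mul_sr] at this
  ring_nf at this
  exact this

variable {ι : Type*} {N : ι → Subgroup (DihedralGroup n)} [∀ i, (N i).Normal]

theorem sr_notMem_iInf_zpowers_r_two_sup (hN : ⨅ i, N i = ⊥) (j : ZMod n) :
    sr j ∉ ⨅ i, zpowers (r 2) ⊔ N i := by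
  intro hj
  have hsup : ∀ i, zpowers (r 2) ⊔ N i = N i := fun i => by
    obtain ⟨z, hz⟩ := exists_r_two_mul_mem_of_mem_sup (mem_iInf.mp hj i)
    rw [r_mul_sr] at hz
    exact sup_eq_right.mpr (zpowers_le.mpr (r_two_mem_of_sr_mem hz))
  simp only [hsup, hN, mem_bot, one_def] at hj
  cases hj

theorem r_mem_zpowers_r_two_of_mem_iInf_sup (hn : 0 < n) (hN : ⨅ i, N i = ⊥) {j : ZMod n}
    (hj : r j ∈ ⨅ i, zpowers (r 2) ⊔ N i) : r j ∈ zpowers (r 2) := by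
  by_contra hjC
  have hodd : ∀ z : ZMod n, ¬Even (2 * z + j) := fun z ⟨a, ha⟩ =>
    hjC (mem_zpowers_r_two_iff.mpr ⟨a - z, by rw [mul_sub, two_mul a, ← ha]; ring_nf⟩)
  obtain ⟨h, rfl⟩ : Even n := by
    by_contra hn2
    exact hodd 0 (ZMod.even_of_odd_modulus (Nat.not_even_iff_odd.mp hn2) _)
  -- `r e ^ h = r h` for every odd `e`, so each `N i` contains the rotation of order two
  have hmem : r (h : ZMod (h + h)) ∈ ⨅ i, N i := mem_iInf.mpr fun i => by
    obtain ⟨z, hz⟩ := exists_r_two_mul_mem_of_mem_sup (mem_iInf.mp hj i)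
    rw [r_mul_r] at hz
    have hpow := (N i).pow_mem hz h
    rwa [r_pow, mul_comm, ZMod.natCast_mul_eq_of_not_even (hodd z)] at hpow
  rw [hN, mem_bot, ← r_zero, r.injEq, ZMod.natCast_eq_zero_iff] at hmem
  have := Nat.le_of_dvd (by omega) hmem
  omega

end DihedralGroup

/-- Let `G = Dₙ` be the dihedral group of order `2n` and `N₁, …, N_k` normal subgroups
with trivial total intersection. Then `⋂ᵢ G'Nᵢ = G'`, and `G' = ⟨r²⟩`. -/
theorem stmt4 {n : ℕ} (hn : 0 < n) {k : ℕ}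
    (N : Fin k → Subgroup (DihedralGroup n)) [∀ i, (N i).Normal]
    (h : (⨅ i, N i) = ⊥) :
    (⨅ i, commutator (DihedralGroup n) ⊔ N i) = commutator (DihedralGroup n) ∧
      commutator (DihedralGroup n) = Subgroup.zpowers (DihedralGroup.r (2 : ZMod n)) := by
  refine ⟨?_, commutator_eq_zpowers_r_two⟩
  rw [commutator_eq_zpowers_r_two]
  refine le_antisymm (fun x hx => ?_) (le_iInf fun i => le_sup_left)
  rcases x with j | j
  · exact r_mem_zpowers_r_two_of_mem_iInf_sup hn h hx
  · exact absurd hx (sr_notMem_iInf_zpowers_r_two_sup h j)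
end

section
/- Let H be a nonabelian group of order p^3 for a prime p and let G = (Z/pZ) × H. Then there exist normal subgroups N_1, N_2 of G with N_1 ∩ N_2 = 1 such that G'N_1 ∩ G'N_2 strictly contains the derived subgroup G'. -/
open Subgroup

/-!
`H` is a nonabelian `p`-group, hence nilpotent of class `c ≥ 2`, and the `(c-1)`-st term of its
lower central series is a nontrivial subgroup of `H' ∩ Z(H)`; pick `β ≠ 1` in it, so that
`p ∣ orderOf β`. With `x` a generator of `ℤ/pℤ`, the subgroups `N₁ = ⟨(x, 1)⟩` and
`N₂ = ⟨(x, β)⟩` are central, hence normal, and meet trivially. Since `G' = 1 × H'` contains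
`(1, β)`, the element `(x, 1) = (x, β) (1, β)⁻¹` lies in `G'N₁ ∩ G'N₂` but not in `G'`.
-/

namespace Subgroup

variable {G : Type*} [Group G]

theorem normal_of_le_center {N : Subgroup G} (h : N ≤ center G) : N.Normal where
  conj_mem n hn g := by rwa [mem_center_iff.mp (h hn) g, mul_inv_cancel_right]

end Subgroup

section Nilpotent

variable {G : Type*} [Group G]

theorem exists_mem_commutator_mem_center_ne_one [Group.IsNilpotent G]
    (h : ¬IsMulCommutative G) : ∃ β ∈ commutator G, β ∈ center G ∧ β ≠ 1 := by
  set c := Group.nilpotencyClass G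
  have hc : 2 ≤ c := by
    by_contra! hc
    exact h (Group.IsNilpotent.nilpotencyClass_le_one_iff.mp (by omega))
  set K := (⊤ : Subgroup G).lowerCentralSeries (c - 1)
  have hK_commutator : K ≤ commutator G :=
    (Subgroup.lowerCentralSeries_antitone ⊤ (by omega : 1 ≤ c - 1)).trans_eq
      top_lowerCentralSeries_one
  have hK_center : K ≤ center G := by
    rw [← centralizer_univ, ← coe_top, ← commutator_eq_bot_iff_le_centralizer,
      ← Subgroup.lowerCentralSeries_succ, Nat.sub_add_cancel (by omega)]
    exact Subgroup.lowerCentralSeries_nilpotencyClass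
  obtain hK | ⟨β, hβK, hβ⟩ := K.bot_or_exists_ne_one
  · have := Subgroup.lowerCentralSeries_eq_bot_iff_nilpotencyClass_le.mp hK
    omega
  · exact ⟨β, hK_commutator hβK, hK_center hβK, hβ⟩

end Nilpotent

section DirectProduct

variable {A H : Type*}

theorem commutator_prod [Group A] [Group H] :
    commutator (A × H) = (commutator A).prod (commutator H) := by
  rw [commutator_def, ← top_prod_top, commutator_prod_prod, ← commutator_def,
    ← commutator_def]

theorem zpowers_mk_one_inf_zpowers_eq_bot [Group A] [Group H] {x : A} {β : H}
    (h : orderOf x ∣ orderOf β) : zpowers (x, (1 : H)) ⊓ zpowers (x, β) = ⊥ := by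
  rw [eq_bot_iff]
  rintro _ ⟨⟨n, rfl⟩, ⟨m, hm⟩⟩
  simp only [Prod.pow_mk, one_zpow, Prod.mk.injEq] at hm
  have hxm : x ^ m = 1 := orderOf_dvd_iff_zpow_eq_one.mp <|
    (Int.natCast_dvd_natCast.mpr h).trans (orderOf_dvd_iff_zpow_eq_one.mpr hm.2)
  simp [← hm.1, hxm]

variable [CommGroup A] [Group H]

theorem commutator_lt_sup_zpowers_inf_sup_zpowers {x : A} (hx : x ≠ 1) {β : H}
    (hβ : β ∈ commutator H) :
    commutator (A × H) <
      (commutator (A × H) ⊔ zpowers (x, 1)) ⊓ (commutator (A × H) ⊔ zpowers (x, β)) := by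
  have hG' : commutator (A × H) = (⊥ : Subgroup A).prod (commutator H) := by
    rw [commutator_prod, commutator_eq_bot]
  refine SetLike.lt_iff_le_and_exists.mpr ⟨le_inf le_sup_left le_sup_left, (x, 1),
    mem_inf.mpr ⟨mem_sup_right (mem_zpowers _), ?_⟩, ?_⟩
  · have hβ' : ((1 : A), β) ∈ commutator (A × H) := hG' ▸ ⟨one_mem _, hβ⟩
    simpa using mul_mem (mem_sup_right (mem_zpowers (x, β))) (inv_mem (mem_sup_left hβ'))
  · rw [hG']
    exact fun h ↦ hx h.1

theorem exists_normal_inf_eq_bot_commutator_lt {x : A} {β : H} (hx : x ≠ 1)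
    (hβ : β ∈ commutator H) (hβ_center : β ∈ center H) (hord : orderOf x ∣ orderOf β) :
    ∃ N₁ N₂ : Subgroup (A × H), N₁.Normal ∧ N₂.Normal ∧ N₁ ⊓ N₂ = ⊥ ∧
      commutator (A × H) < (commutator (A × H) ⊔ N₁) ⊓ (commutator (A × H) ⊔ N₂) := by
  have central {y : A} {γ : H} (hγ : γ ∈ center H) : (zpowers (y, γ)).Normal :=
    normal_of_le_center <| zpowers_le.mpr <| mem_center_iff.mpr fun g ↦
      Prod.ext (mul_comm _ _) (mem_center_iff.mp hγ g.2)
  exact ⟨_, _, central (one_mem _), central hβ_center, zpowers_mk_one_inf_zpowers_eq_bot hord,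
    commutator_lt_sup_zpowers_inf_sup_zpowers hx hβ⟩

end DirectProduct

/-- Let `H` be a nonabelian group of order `p³` and `G = (ℤ/pℤ) × H`. Then there are
normal subgroups `N₁, N₂` of `G` with `N₁ ∩ N₂ = 1` such that `G'N₁ ∩ G'N₂` strictly
contains the derived subgroup `G'`. -/
theorem stmt7 {p : ℕ} (hp : p.Prime) {H : Type*} [Group H]
    (hcard : Nat.card H = p ^ 3) (hna : ∃ a b : H, a * b ≠ b * a) :
    ∃ N₁ N₂ : Subgroup (Multiplicative (ZMod p) × H),
      N₁.Normal ∧ N₂.Normal ∧ N₁ ⊓ N₂ = ⊥ ∧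
      commutator (Multiplicative (ZMod p) × H) <
        (commutator (Multiplicative (ZMod p) × H) ⊔ N₁) ⊓
          (commutator (Multiplicative (ZMod p) × H) ⊔ N₂) := by
  have : Fact p.Prime := ⟨hp⟩
  have : Finite H := Nat.finite_of_card_ne_zero (by simp [hcard, hp.ne_zero])
  have hH : IsPGroup p H := IsPGroup.of_card hcard
  have := hH.isNilpotent
  obtain ⟨a, b, hab⟩ := hna
  obtain ⟨β, hβ, hβ_center, hβ1⟩ :=
    exists_mem_commutator_mem_center_ne_one fun h : IsMulCommutative H ↦ hab (h.is_comm.comm a b)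
  refine exists_normal_inf_eq_bot_commutator_lt (x := Multiplicative.ofAdd (1 : ZMod p))
    (by simp) hβ hβ_center ?_
  rw [orderOf_ofAdd_eq_addOrderOf, ZMod.addOrderOf_one]
  exact hH.dvd_orderOf hβ1
end

section
/- Let G be a finite group and N_1, ..., N_n normal subgroups. A homomorphism f : G → Q/Z can be written as f = f_1 + ⋯ + f_n with each f_i : G → Q/Z a homomorphism vanishing on N_i, if and only if f vanishes on the intersection ∩_{i=1}^n G'N_i. -/
/-!
Write `Kᵢ = G'Nᵢ`. Each `G/Kᵢ` is abelian, so `G → ∏ᵢ G/Kᵢ` is a map into an abelian group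
with kernel `⋂ᵢ Kᵢ`. If `f` kills that kernel it factors through the image, and since `ℚ/ℤ` is
divisible, hence an injective `ℤ`-module, the factor extends to all of `∏ᵢ G/Kᵢ`. Restricting the
extension to the factors `G/Kᵢ` gives the summands `fᵢ`.
-/

open scoped IsMulCommutative

namespace MonoidHom

variable {A : Type*} [AddCommGroup A] [DivisibleBy A ℤ]

theorem exists_comp_eq_of_injective {P Q : Type*} [CommGroup P] [CommGroup Q]
    (ι : P →* Q) (hι : Function.Injective ι) (g : P →* Multiplicative A) :
    ∃ h : Q →* Multiplicative A, h.comp ι = g := by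
  obtain ⟨h, hh⟩ := (Module.Baer.of_divisible A).extension_property_addMonoidHom
    (toAdditive ι) hι (toAdditiveLeft g)
  exact ⟨AddMonoidHom.toMultiplicativeRight h, ext fun x => DFunLike.congr_fun hh x⟩

theorem exists_comp_eq_of_ker_le {G P : Type*} [Group G] [CommGroup P]
    (φ : G →* P) (f : G →* Multiplicative A) (hf : φ.ker ≤ f.ker) :
    ∃ h : P →* Multiplicative A, h.comp φ = f := by
  let g := φ.rangeRestrict.liftOfSurjective φ.rangeRestrict_surjective
    ⟨f, by rwa [ker_rangeRestrict]⟩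
  obtain ⟨h, hh⟩ := exists_comp_eq_of_injective φ.range.subtype φ.range.subtype_injective g
  refine ⟨h, ?_⟩
  rw [← φ.subtype_comp_rangeRestrict, ← comp_assoc, hh]
  exact φ.rangeRestrict.liftOfRightInverse_comp _ _ _

theorem ker_pi {G ι : Type*} [Group G] {M : ι → Type*} [∀ i, Group (M i)]
    (φ : ∀ i, G →* M i) : (pi φ).ker = ⨅ i, (φ i).ker := by
  ext x
  simp [funext_iff, Subgroup.mem_iInf]

end MonoidHom

theorem exists_prod_eq_iff_iInf_le_ker {G A ι : Type*} [Group G] [AddCommGroup A]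
    [DivisibleBy A ℤ] [Fintype ι] [DecidableEq ι] (K : ι → Subgroup G)
    (hK : ∀ i, commutator G ≤ K i) (f : G →* Multiplicative A) :
    (∃ F : ι → (G →* Multiplicative A), (∀ i, K i ≤ (F i).ker) ∧ f = ∏ i, F i) ↔
      ⨅ i, K i ≤ f.ker := by
  constructor
  · rintro ⟨F, hF, rfl⟩ x hx
    simp only [MonoidHom.mem_ker, MonoidHom.finsetProd_apply]
    exact Finset.prod_eq_one fun i _ => hF i (Subgroup.mem_iInf.mp hx i)
  · intro hf
    have (i : ι) : (K i).Normal := .of_commutator_le G (hK i)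
    have (i : ι) : IsMulCommutative (G ⧸ K i) :=
      Subgroup.Normal.quotient_commutative_iff_commutator_le.mpr (hK i)
    let φ := MonoidHom.pi fun i => QuotientGroup.mk' (K i)
    have hφ : φ.ker = ⨅ i, K i := by simp [φ, MonoidHom.ker_pi]
    obtain ⟨h, rfl⟩ := MonoidHom.exists_comp_eq_of_ker_le φ f (hφ ▸ hf)
    refine ⟨fun i => h.comp ((MonoidHom.mulSingle _ i).comp (QuotientGroup.mk' (K i))),
      fun i x hx => ?_, ?_⟩
    · simp [(QuotientGroup.eq_one_iff x).mpr hx]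
    · refine MonoidHom.ext fun x => ?_
      simp only [MonoidHom.finsetProd_apply, MonoidHom.comp_apply, ← map_prod]
      exact congrArg h (Finset.univ_prod_mulSingle (φ x)).symm

theorem stmt9_general {G : Type*} [Group G] {n : ℕ}
    (N : Fin n → Subgroup G)
    (f : G →* Multiplicative (AddCircle (1 : ℚ))) :
    (∃ F : Fin n → (G →* Multiplicative (AddCircle (1 : ℚ))),
        (∀ i, ∀ x ∈ N i, F i x = 1) ∧ f = ∏ i, F i) ↔
      ∀ x ∈ ⨅ i, commutator G ⊔ N i, f x = 1 := by
  have hker (F : G →* Multiplicative (AddCircle (1 : ℚ))) (i : Fin n) :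
      commutator G ⊔ N i ≤ F.ker ↔ ∀ x ∈ N i, F x = 1 := by
    rw [sup_le_iff, and_iff_right (Abelianization.commutator_subset_ker F)]
    rfl
  simpa [hker, SetLike.le_def] using
    exists_prod_eq_iff_iInf_le_ker (fun i => commutator G ⊔ N i) (fun _ => le_sup_left) f

/-- For a finite group `G` with normal subgroups `N₁, …, Nₙ`, a homomorphism
`f : G → ℚ/ℤ` decomposes as `f = f₁ + ⋯ + fₙ` with each `fᵢ` vanishing on `Nᵢ`
iff `f` vanishes on `⋂ᵢ G'Nᵢ`. (Here `ℚ/ℤ` is written multiplicatively.) -/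
theorem stmt9 {G : Type*} [Group G] [Finite G] {n : ℕ}
    (N : Fin n → Subgroup G) [∀ i, (N i).Normal]
    (f : G →* Multiplicative (AddCircle (1 : ℚ))) :
    (∃ F : Fin n → (G →* Multiplicative (AddCircle (1 : ℚ))),
        (∀ i, ∀ x ∈ N i, F i x = 1) ∧ f = ∏ i, F i) ↔
      ∀ x ∈ ⨅ i, commutator G ⊔ N i, f x = 1 :=
  stmt9_general N f
end

section
/- Let G be a finite group and N_1, ..., N_n normal subgroups with ∩_i G'N_i = G'. Then the sum map χ : Hom(G/N_1, Q/Z) × ⋯ × Hom(G/N_n, Q/Z) → Hom(G, Q/Z), sending (f_1, ..., f_n) to the homomorphism g ↦ ∑_i f_i(g N_i), is surjective. -/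
/-!
A homomorphism `G → ℚ/ℤ` factors through the abelianization `A`. If `Mᵢ` is the image of `Nᵢ`
in `A`, the hypothesis says `⋂ᵢ Mᵢ = 1`, i.e. `A` embeds into `∏ᵢ A/Mᵢ`. As `ℚ/ℤ` is divisible,
hence an injective `ℤ`-module, the homomorphism extends to this product, and the restrictions of
the extension to the factors `A/Mᵢ` are the required summands.
-/

open Function

local notation "ℚ⧸ℤ" => Multiplicative (AddCircle (1 : ℚ))

theorem MonoidHom.exists_comp_eq_of_injective_s19 {A B : Type*} [CommGroup A] [CommGroup B]
    {f : A →* B} (hf : Injective f) (g : A →* ℚ⧸ℤ) : ∃ h : B →* ℚ⧸ℤ, h.comp f = g := by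
  obtain ⟨h, hh⟩ := (Module.Baer.of_divisible _).extension_property_addMonoidHom
    f.toAdditive hf (MonoidHom.toAdditiveLeft g)
  exact ⟨MonoidHom.toAdditiveLeft.symm h, by ext a; exact congr($hh (Additive.ofMul a))⟩

theorem MonoidHom.exists_prod_eq_of_iInf_eq_bot {A ι : Type*} [CommGroup A] [Fintype ι]
    {M : ι → Subgroup A} (hM : ⨅ i, M i = ⊥) (ψ : A →* ℚ⧸ℤ) :
    ∃ ψ' : ι → A →* ℚ⧸ℤ, (∀ i, M i ≤ (ψ' i).ker) ∧ ∏ i, ψ' i = ψ := by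
  classical
  let e : A →* ∀ i, A ⧸ M i := .pi fun i => QuotientGroup.mk' (M i)
  have he : Injective e := by
    rw [← MonoidHom.ker_eq_bot_iff, ← hM]
    ext a
    simp [e, Subgroup.mem_iInf, funext_iff, QuotientGroup.eq_one_iff]
  obtain ⟨Ψ, hΨ⟩ := exists_comp_eq_of_injective_s19 he ψ
  refine ⟨fun i => Ψ.comp ((MonoidHom.mulSingle _ i).comp (QuotientGroup.mk' (M i))),
    fun i a ha => ?_, ?_⟩
  · simp [(QuotientGroup.eq_one_iff a).mpr ha]
  · rw [← hΨ]
    ext a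
    simp only [MonoidHom.finsetProd_apply, MonoidHom.comp_apply, ← map_prod]
    exact congr(Ψ $(Finset.univ_prod_mulSingle (e a)))

theorem Abelianization.iInf_map_of_eq_bot {G ι : Type*} [Group G] {N : ι → Subgroup G}
    (h : ⨅ i, commutator G ⊔ N i = commutator G) : ⨅ i, (N i).map of = ⊥ := by
  apply Subgroup.comap_injective (f := of) QuotientGroup.mk_surjective
  rw [Subgroup.comap_iInf, MonoidHom.comap_bot, ker_of, ← h]
  simp only [Subgroup.comap_map_eq, ker_of, sup_comm]

theorem stmt19_general {G : Type*} [Group G] {n : ℕ}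
    (N : Fin n → Subgroup G) [∀ i, (N i).Normal]
    (h : (⨅ i, commutator G ⊔ N i) = commutator G) :
    Function.Surjective
      (fun F : ∀ i, (G ⧸ N i) →* Multiplicative (AddCircle (1 : ℚ)) =>
        ∏ i, (F i).comp (QuotientGroup.mk' (N i))) := by
  intro φ
  obtain ⟨ψ, hψ, hprod⟩ := MonoidHom.exists_prod_eq_of_iInf_eq_bot
    (Abelianization.iInf_map_of_eq_bot h) (Abelianization.lift φ)
  refine ⟨fun i => QuotientGroup.lift (N i) ((ψ i).comp Abelianization.of)
    (by rw [← MonoidHom.comap_ker]; exact Subgroup.map_le_iff_le_comap.mp (hψ i)),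
    MonoidHom.ext fun g => ?_⟩
  rw [← Abelianization.lift_apply_of φ g, ← hprod]
  simp

/-- If `G` is a finite group with normal subgroups `N₁, …, Nₙ` satisfying
`⋂ᵢ G'Nᵢ = G'`, then the sum map
`Hom(G/N₁, ℚ/ℤ) × ⋯ × Hom(G/Nₙ, ℚ/ℤ) → Hom(G, ℚ/ℤ)` is surjective. -/
theorem stmt19 {G : Type*} [Group G] [Finite G] {n : ℕ}
    (N : Fin n → Subgroup G) [∀ i, (N i).Normal]
    (h : (⨅ i, commutator G ⊔ N i) = commutator G) :
    Function.Surjective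
      (fun F : ∀ i, (G ⧸ N i) →* Multiplicative (AddCircle (1 : ℚ)) =>
        ∏ i, (F i).comp (QuotientGroup.mk' (N i))) :=
  stmt19_general N h
end
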